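/- Let 𝒞 be an admissible contravariantly finite full additive subcategory of an abelian category 𝒜. Then every 𝒞-acyclic complex in 𝒜 is acyclic. -/

import Mathlib

/-! Cover the object of cycles `Zⁱ` by an epimorphism `p : C ⟶ Zⁱ` with `C ∈ 𝒞`
(a right `𝒞`-approximation, epi by admissibility). Exactness of `Hom(C, X)` lifts `p`
to `C ⟶ Xⁱ⁻¹`, so the map `Xⁱ⁻¹ ⟶ Zⁱ` is an epimorphism, i.e. `X` is exact at `i`. -/

open CategoryTheory Limits

universe v u

variable {A : Type u} [Category.{v} A] [Abelian A]

/-- A complex `X` is `𝒞`-acyclic if `Hom_𝒜(C, X)` is an acyclic complex of abelian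
groups for every `C ∈ 𝒞`. -/
def CAcyclic (𝒞 : Set A) (X : CochainComplex A ℤ) : Prop :=
  ∀ C ∈ 𝒞, ∀ i : ℤ,
    (((preadditiveCoyoneda.obj (Opposite.op C)).mapHomologicalComplex
      (ComplexShape.up ℤ)).obj X).ExactAt i

/-- A chain map `f` is a `𝒞`-quasi-isomorphism if `Hom_𝒜(C, f)` is a quasi-isomorphism
for every `C ∈ 𝒞`. -/
def CQuasiIso (𝒞 : Set A) {X Y : CochainComplex A ℤ} (f : X ⟶ Y) : Prop :=
  ∀ C ∈ 𝒞, QuasiIso (((preadditiveCoyoneda.obj (Opposite.op C)).mapHomologicalComplex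
      (ComplexShape.up ℤ)).map f)

/-- A cochain complex is bounded above. -/
def BoundedAbove (X : CochainComplex A ℤ) : Prop :=
  ∃ n : ℤ, ∀ i : ℤ, n < i → IsZero (X.X i)

/-- `f : C ⟶ M` is a right `𝒞`-approximation of `M`. -/
def IsRightApprox (𝒞 : Set A) {C M : A} (f : C ⟶ M) : Prop :=
  C ∈ 𝒞 ∧ ∀ C' ∈ 𝒞, ∀ g : C' ⟶ M, ∃ h : C' ⟶ C, h ≫ f = g

/-- `𝒞` is contravariantly finite in `𝒜`: every object has a right `𝒞`-approximation. -/
def ContravariantlyFinite (𝒞 : Set A) : Prop :=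
  ∀ M : A, ∃ (C : A) (f : C ⟶ M), IsRightApprox 𝒞 f

/-- `𝒞` is admissible: every right `𝒞`-approximation is an epimorphism. -/
def Admissible (𝒞 : Set A) : Prop :=
  ∀ ⦃C M : A⦄ (f : C ⟶ M), IsRightApprox 𝒞 f → Epi f

omit [Abelian A] in
lemma exists_epi_of_contravariantlyFinite_of_admissible {𝒞 : Set A}
    (hcf : ContravariantlyFinite 𝒞) (hadm : Admissible 𝒞) (M : A) :
    ∃ C ∈ 𝒞, ∃ p : C ⟶ M, Epi p := by
  obtain ⟨C, p, hp⟩ := hcf M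
  exact ⟨C, hp.1, p, hadm p hp⟩

namespace CategoryTheory.ShortComplex

omit [Abelian A] in
lemma exists_lift_of_exact_map_preadditiveCoyoneda [Preadditive A] (S : ShortComplex A)
    {C : A} (hS : (S.map (preadditiveCoyoneda.obj (Opposite.op C))).Exact)
    (g : C ⟶ S.X₂) (hg : g ≫ S.g = 0) : ∃ l : C ⟶ S.X₁, l ≫ S.f = g :=
  (ab_exact_iff _).mp hS g hg

lemma exact_of_epi_of_lift_iCycles (S : ShortComplex A) {C : A} (p : C ⟶ S.cycles) [Epi p]
    (l : C ⟶ S.X₁) (hl : l ≫ S.f = p ≫ S.iCycles) : S.Exact := by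
  rw [S.exact_iff_epi_toCycles]
  have hfac : l ≫ S.toCycles = p := by
    rw [← cancel_mono S.iCycles]
    simpa using hl
  exact epi_of_epi_fac hfac

lemma exact_of_exact_map_preadditiveCoyoneda (𝒞 : Set A)
    (h𝒞 : ∀ M : A, ∃ C ∈ 𝒞, ∃ p : C ⟶ M, Epi p) (S : ShortComplex A)
    (hS : ∀ C ∈ 𝒞, (S.map (preadditiveCoyoneda.obj (Opposite.op C))).Exact) : S.Exact := by
  obtain ⟨C, hC, p, hp⟩ := h𝒞 S.cycles
  obtain ⟨l, hl⟩ := S.exists_lift_of_exact_map_preadditiveCoyoneda (hS C hC)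
    (p ≫ S.iCycles) (by simp)
  exact S.exact_of_epi_of_lift_iCycles p l hl

end CategoryTheory.ShortComplex

theorem stmt10 (𝒞 : Set A) (hcf : ContravariantlyFinite 𝒞) (hadm : Admissible 𝒞)
    (X : CochainComplex A ℤ) (hX : CAcyclic 𝒞 X) :
    ∀ i : ℤ, X.ExactAt i := fun i =>
  ShortComplex.exact_of_exact_map_preadditiveCoyoneda 𝒞
    (exists_epi_of_contravariantlyFinite_of_admissible hcf hadm) (X.sc i)
    (fun C hC => hX C hC i)
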